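/- (Patch diffusion) Let k₁,…,k_J ∈ ℝ^a be pairwise orthogonal nonzero vectors with J = a, and define f̃(p, t) = (∏_j ‖k_j‖²) ∏_{j=1}^J Σ_{l=1}^L w_{jl} G_{μ_l, σ_j²(t)}(⟨k_j, p⟩) with σ_j²(t) = σ₀² + 2t‖k_j‖². Then f̃(·, t) satisfies the heat equation ∂_t f̃ = Δ_p f̃ on ℝ^a × (0, ∞). -/

import Mathlib

open Matrix Real Finset

/-- The one-dimensional Gaussian density. -/
noncomputable def gauss1 (μ σ2 x : ℝ) : ℝ :=
  (Real.sqrt (2 * Real.pi * σ2))⁻¹ * Real.exp (-(x - μ) ^ 2 / (2 * σ2))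

/-- Partial derivative in the `i`-th coordinate direction. -/
noncomputable def pderiv' {a : ℕ} (i : Fin a) (g : (Fin a → ℝ) → ℝ) (x : Fin a → ℝ) : ℝ :=
  fderiv ℝ g x (Pi.single i 1)

/-!
Each factor `x ↦ Σ_l w_l G_{μ_l, s}(x)` solves the one-dimensional heat equation in its variance,
`∂_s G = ½ ∂_x² G`; with `s = σ₀² + 2t‖k_j‖²` this gives `∂_t u_j = ‖k_j‖² u_j''`. Writing the
product of ridge functions as `F(q) = U(⟨k_1, q⟩, …, ⟨k_a, q⟩)` with `U(x) = ∏_j u_j(x_j)`, its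
Laplacian is `Σ_{j,m} ⟨k_j, k_m⟩ ∂_j ∂_m U`; orthogonality kills every cross term `j ≠ m`, leaving
`Σ_j ‖k_j‖² u_j'' ∏_{m ≠ j} u_m`, which is the time derivative of `F` by the product rule.
-/

open Function

noncomputable def gauss1Dx (μ s x : ℝ) : ℝ := -(x - μ) / s * gauss1 μ s x

noncomputable def gauss1Dxx (μ s x : ℝ) : ℝ := ((x - μ) ^ 2 - s) / s ^ 2 * gauss1 μ s x

lemma hasDerivAt_gauss1 (μ s x : ℝ) : HasDerivAt (gauss1 μ s) (gauss1Dx μ s x) x := by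
  have hexp := ((((hasDerivAt_id x).sub_const μ).fun_pow 2).fun_neg.div_const (2 * s)).exp
  refine (hexp.const_mul (√(2 * π * s))⁻¹).congr_deriv ?_
  simp only [gauss1Dx, gauss1, id]
  ring

lemma hasDerivAt_gauss1Dx (μ s x : ℝ) : HasDerivAt (gauss1Dx μ s) (gauss1Dxx μ s x) x := by
  refine ((((hasDerivAt_id x).sub_const μ).fun_neg.div_const s).mul
    (hasDerivAt_gauss1 μ s x)).congr_deriv ?_
  simp only [gauss1Dx, gauss1Dxx, id]
  field_simp
  ring

lemma hasDerivAt_gauss1_variance (μ x : ℝ) {s : ℝ} (hs : 0 < s) :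
    HasDerivAt (fun s => gauss1 μ s x) (gauss1Dxx μ s x / 2) s := by
  have h2πs : 0 < 2 * π * s := by positivity
  have hsqrt : HasDerivAt (fun s => √(2 * π * s)) (π / √(2 * π * s)) s := by
    refine ((Real.hasDerivAt_sqrt h2πs.ne').comp s
      ((hasDerivAt_id s).const_mul (2 * π))).congr_deriv ?_
    field_simp
  have hexp : HasDerivAt (fun s => rexp (-(x - μ) ^ 2 / (2 * s)))
      (rexp (-(x - μ) ^ 2 / (2 * s)) * ((x - μ) ^ 2 / (2 * s ^ 2))) s := by
    refine ((hasDerivAt_const s (-(x - μ) ^ 2)).fun_div ((hasDerivAt_id s).const_mul 2)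
      (by simp [hs.ne'])).exp.congr_deriv ?_
    simp only [id]
    field_simp
    ring
  refine ((hsqrt.fun_inv (Real.sqrt_pos.mpr h2πs).ne').mul hexp).congr_deriv ?_
  simp only [gauss1Dxx, gauss1]
  field_simp
  rw [Real.sq_sqrt (by positivity)]
  ring

lemma hasDerivAt_gauss1_diffusion (μ x v₀ c : ℝ) {t : ℝ} (ht : 0 < v₀ + 2 * t * c) :
    HasDerivAt (fun τ => gauss1 μ (v₀ + 2 * τ * c) x) (c * gauss1Dxx μ (v₀ + 2 * t * c) x) t := by
  have hv : HasDerivAt (fun τ => v₀ + 2 * τ * c) (2 * c) t := by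
    simpa using (((hasDerivAt_id t).const_mul 2).mul_const c).const_add v₀
  refine ((hasDerivAt_gauss1_variance μ x ht).comp t hv).congr_deriv ?_
  ring

lemma pderiv'_const_mul {a : ℕ} (i : Fin a) (c : ℝ) (g : (Fin a → ℝ) → ℝ) :
    pderiv' i (fun q => c * g q) = fun x => c * pderiv' i g x := by
  funext x
  rw [pderiv', show (fun q => c * g q) = c • g from rfl, fderiv_const_smul_field]
  rfl

lemma hasFDerivAt_dotProduct {a : ℕ} (v z : Fin a → ℝ) :
    HasFDerivAt (v ⬝ᵥ ·) (∑ i, v i • ContinuousLinearMap.proj i : (Fin a → ℝ) →L[ℝ] ℝ) z :=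
  HasFDerivAt.fun_sum fun i _ => (hasFDerivAt_apply i z).const_mul (v i)

section RidgeProduct

variable {ι : Type*} [Fintype ι] [DecidableEq ι]

lemma prod_update_apply (Φ : ι → ℝ → ℝ) (j : ι) (φ : ℝ → ℝ) (y : ι → ℝ) :
    ∏ m, update Φ j φ m (y m) = φ (y j) * ∏ m ∈ univ.erase j, Φ m (y m) := by
  rw [← mul_prod_erase _ _ (mem_univ j), update_self]
  congr 1
  exact prod_congr rfl fun m hm => by rw [update_of_ne (ne_of_mem_erase hm)]

variable {a : ℕ} {k : ι → Fin a → ℝ} {Φ Φ' Φ'' : ι → ℝ → ℝ}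

/- Differentiating the `j`-th factor replaces `Φ j` by `Φ' j`, so the derivative is again a
combination of ridge products and the lemma can be applied a second time. -/
lemma hasFDerivAt_prod_ridge (hΦ : ∀ j x, HasDerivAt (Φ j) (Φ' j x) x) (z : Fin a → ℝ) :
    HasFDerivAt (fun q => ∏ j, Φ j (k j ⬝ᵥ q))
      (∑ j, (∏ m, update Φ j (Φ' j) m (k m ⬝ᵥ z)) •
        (∑ i, k j i • ContinuousLinearMap.proj i : (Fin a → ℝ) →L[ℝ] ℝ)) z := by
  refine (HasFDerivAt.finsetProd fun j _ =>
    (hΦ j _).comp_hasFDerivAt z (hasFDerivAt_dotProduct (k j) z)).congr_fderiv ?_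
  refine sum_congr rfl fun j _ => ?_
  rw [prod_update_apply, smul_smul, mul_comm]
  rfl

lemma pderiv'_prod_ridge (hΦ : ∀ j x, HasDerivAt (Φ j) (Φ' j x) x) (i : Fin a) :
    pderiv' i (fun q => ∏ j, Φ j (k j ⬝ᵥ q))
      = fun z => ∑ j, k j i * ∏ m, update Φ j (Φ' j) m (k m ⬝ᵥ z) := by
  funext z
  rw [pderiv', (hasFDerivAt_prod_ridge hΦ z).fderiv]
  simp [Pi.single_apply, mul_comm]

lemma sum_pderiv'_pderiv'_prod_ridge (horth : Pairwise fun i j => k i ⬝ᵥ k j = 0)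
    (hΦ : ∀ j x, HasDerivAt (Φ j) (Φ' j x) x) (hΦ' : ∀ j x, HasDerivAt (Φ' j) (Φ'' j x) x)
    (p : Fin a → ℝ) :
    ∑ i, pderiv' i (pderiv' i fun q => ∏ j, Φ j (k j ⬝ᵥ q)) p
      = ∑ j, (k j ⬝ᵥ k j) * ∏ m, update Φ j (Φ'' j) m (k m ⬝ᵥ p) := by
  have hΨ : ∀ j m x, HasDerivAt (update Φ j (Φ' j) m) (update Φ' j (Φ'' j) m x) x := by
    intro j m x
    rcases eq_or_ne m j with rfl | hmj
    · simpa using hΦ' m x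
    · simpa [hmj] using hΦ m x
  set P := fun j m => ∏ n, update (update Φ j (Φ' j)) m (update Φ' j (Φ'' j) m) n (k n ⬝ᵥ p)
  have hsecond : ∀ i, pderiv' i (fun z => ∑ j, k j i * ∏ m, update Φ j (Φ' j) m (k m ⬝ᵥ z)) p
      = ∑ j, k j i * ∑ m, k m i * P j m := by
    intro i
    rw [pderiv', (HasFDerivAt.fun_sum fun j _ =>
      (hasFDerivAt_prod_ridge (hΨ j) p).const_mul (k j i)).fderiv]
    simp [Pi.single_apply, mul_comm, P]
  calc ∑ i, pderiv' i (pderiv' i fun q => ∏ j, Φ j (k j ⬝ᵥ q)) p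
      = ∑ j, ∑ m, (k j ⬝ᵥ k m) * P j m := by
        simp_rw [pderiv'_prod_ridge hΦ, hsecond, mul_sum, dotProduct, sum_mul]
        rw [sum_comm]
        refine sum_congr rfl fun j _ => ?_
        rw [sum_comm]
        exact sum_congr rfl fun m _ => sum_congr rfl fun i _ => by ring
    _ = ∑ j, (k j ⬝ᵥ k j) * P j j :=
        sum_congr rfl fun j _ => sum_eq_single j
          (fun m _ hmj => by rw [horth hmj.symm, zero_mul]) (by simp)
    _ = ∑ j, (k j ⬝ᵥ k j) * ∏ m, update Φ j (Φ'' j) m (k m ⬝ᵥ p) := by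
        simp [P, update_idem]

theorem hasDerivAt_prod_ridge_of_heat (horth : Pairwise fun i j => k i ⬝ᵥ k j = 0)
    {u : ι → ℝ → ℝ → ℝ} {u' u'' : ι → ℝ → ℝ} {p : Fin a → ℝ} {t : ℝ}
    (hx : ∀ j x, HasDerivAt (u j · t) (u' j x) x) (hxx : ∀ j x, HasDerivAt (u' j) (u'' j x) x)
    (ht : ∀ j, HasDerivAt (u j (k j ⬝ᵥ p)) ((k j ⬝ᵥ k j) * u'' j (k j ⬝ᵥ p)) t) :
    HasDerivAt (fun τ => ∏ j, u j (k j ⬝ᵥ p) τ)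
      (∑ i, pderiv' i (pderiv' i fun q => ∏ j, u j (k j ⬝ᵥ q) t) p) t := by
  rw [sum_pderiv'_pderiv'_prod_ridge (Φ := fun j x => u j x t) horth hx hxx]
  refine (HasDerivAt.fun_finsetProd fun j _ => ht j).congr_deriv (sum_congr rfl fun j _ => ?_)
  rw [prod_update_apply, smul_eq_mul]
  ring

end RidgeProduct

theorem patch_diffusion_general (a L : ℕ)
    (k : Fin a → (Fin a → ℝ))
    (horth : ∀ i j, i ≠ j → k i ⬝ᵥ k j = 0)
    (σ₀ : ℝ) (hσ₀ : 0 < σ₀)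
    (w : Fin a → Fin L → ℝ)
    (μ : Fin L → ℝ)
    (f : (Fin a → ℝ) → ℝ → ℝ)
    (hf : ∀ p t, f p t = (∏ j, k j ⬝ᵥ k j) *
      ∏ j, ∑ l, w j l * gauss1 (μ l) (σ₀ ^ 2 + 2 * t * (k j ⬝ᵥ k j)) (k j ⬝ᵥ p)) :
    ∀ (p : Fin a → ℝ) (t : ℝ), 0 < t →
      deriv (fun s => f p s) t
        = ∑ i : Fin a, pderiv' i (fun z => pderiv' i (fun q => f q t) z) p := by
  intro p t ht
  have hvar : ∀ j, 0 < σ₀ ^ 2 + 2 * t * (k j ⬝ᵥ k j) := fun j => by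
    have := dotProduct_self_star_nonneg (k j)
    simp only [star_trivial] at this
    positivity
  have heat := hasDerivAt_prod_ridge_of_heat (p := p) horth
    (u := fun j x τ => ∑ l, w j l * gauss1 (μ l) (σ₀ ^ 2 + 2 * τ * (k j ⬝ᵥ k j)) x)
    (u'' := fun j x => ∑ l, w j l * gauss1Dxx (μ l) (σ₀ ^ 2 + 2 * t * (k j ⬝ᵥ k j)) x)
    (fun j x => HasDerivAt.fun_sum fun l _ => (hasDerivAt_gauss1 _ _ x).const_mul (w j l))
    (fun j x => HasDerivAt.fun_sum fun l _ => (hasDerivAt_gauss1Dx _ _ x).const_mul (w j l))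
    (fun j => (HasDerivAt.fun_sum fun l _ =>
      (hasDerivAt_gauss1_diffusion (μ l) _ _ _ (hvar j)).const_mul (w j l)).congr_deriv
        (by simp only [mul_sum]; exact sum_congr rfl fun l _ => by ring))
  rw [show (fun s => f p s) = _ from funext (hf p), (heat.const_mul _).deriv,
    show (fun q => f q t) = _ from funext (hf · t)]
  simp only [pderiv'_const_mul, mul_sum]

/-- (Patch diffusion) For pairwise orthogonal nonzero `k₁,…,k_a`, the function
`f̃(p,t) = (∏_j ‖k_j‖²) ∏_j Σ_l w_{jl} G_{μ_l, σ₀² + 2t‖k_j‖²}(⟨k_j,p⟩)` satisfies the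
heat equation `∂_t f̃ = Δ_p f̃` on `ℝ^a × (0,∞)`. -/
theorem patch_diffusion (a L : ℕ)
    (k : Fin a → (Fin a → ℝ))
    (horth : ∀ i j, i ≠ j → k i ⬝ᵥ k j = 0)
    (hnz : ∀ j, k j ≠ 0)
    (σ₀ : ℝ) (hσ₀ : 0 < σ₀)
    (w : Fin a → Fin L → ℝ) (hw : ∀ j l, 0 ≤ w j l) (hwsum : ∀ j, ∑ l, w j l = 1)
    (μ : Fin L → ℝ)
    (f : (Fin a → ℝ) → ℝ → ℝ)
    (hf : ∀ p t, f p t = (∏ j, k j ⬝ᵥ k j) *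
      ∏ j, ∑ l, w j l * gauss1 (μ l) (σ₀ ^ 2 + 2 * t * (k j ⬝ᵥ k j)) (k j ⬝ᵥ p)) :
    ∀ (p : Fin a → ℝ) (t : ℝ), 0 < t →
      deriv (fun s => f p s) t
        = ∑ i : Fin a, pderiv' i (fun z => pderiv' i (fun q => f q t) z) p :=
  patch_diffusion_general a L k horth σ₀ hσ₀ w μ f hf
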